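/- arXiv:1901.06807 — 2 statements merged into one kernel-verified Lean document; each statement's English description precedes it below -/
import Mathlib

section
/- Let q ≤ 2 with q ≠ 1 and let Y be a positive definite n×n complex matrix. Then Tr(Y) equals the supremum over positive definite matrices X of Tr(X) - Tr(X^{2-q}(log_q X - log_q Y)), and this supremum is attained at X = Y. -/
/-! Diagonalise `X = U diag(a) U*` and `Y = V diag(b) V*`. Every trace `Tr (f(X) g(Y))` equals
`∑ᵢⱼ wᵢⱼ f(aᵢ) g(bⱼ)` with `wᵢⱼ = |(U* V)ᵢⱼ|²`, and `w` is doubly stochastic, so the trace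
inequality reduces, weight by weight, to the scalar inequality
`x - x^(2-q) (log_q x - log_q y) ≤ y`. With `r = q - 1 ≤ 1` this reads
`r x^(1-r) y^r ≤ r ((1-r) x + r y)`: weighted AM-GM for `r > 0`, Bernoulli's inequality
for `r < 0`. -/

open Matrix ComplexOrder

variable {n : ℕ}

/-- Apply a real function to a matrix via the spectral decomposition (functional calculus).
Returns `0` if the matrix is not Hermitian. -/
noncomputable def matFun (f : ℝ → ℝ) (A : Matrix (Fin n) (Fin n) ℂ) :
    Matrix (Fin n) (Fin n) ℂ :=
  if hA : A.IsHermitian then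
    (hA.eigenvectorUnitary : Matrix (Fin n) (Fin n) ℂ) *
      Matrix.diagonal (fun i => (f (hA.eigenvalues i) : ℂ)) *
      (star hA.eigenvectorUnitary : Matrix (Fin n) (Fin n) ℂ)
  else 0

/-- Matrix power `A^r` by functional calculus. -/
noncomputable def mpow (A : Matrix (Fin n) (Fin n) ℂ) (r : ℝ) : Matrix (Fin n) (Fin n) ℂ :=
  matFun (fun t => t ^ r) A

/-- Deformed matrix logarithm `log_q`. -/
noncomputable def mlogq (q : ℝ) (A : Matrix (Fin n) (Fin n) ℂ) : Matrix (Fin n) (Fin n) ℂ :=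
  matFun (fun t => if q = 1 then Real.log t else (t ^ (q - 1) - 1) / (q - 1)) A

/-- Deformed matrix exponential `exp_q`. -/
noncomputable def mexpq (q : ℝ) (M : Matrix (Fin n) (Fin n) ℂ) : Matrix (Fin n) (Fin n) ℂ :=
  matFun (fun s => if q = 1 then Real.exp s else ((q - 1) * s + 1) ^ (1 / (q - 1))) M

/-- Real part of the trace. -/
noncomputable def rtr (A : Matrix (Fin n) (Fin n) ℂ) : ℝ := (Matrix.trace A).re

/-- Scalar deformed logarithm. -/
noncomputable def dlog (q t : ℝ) : ℝ := if q = 1 then Real.log t else (t ^ (q - 1) - 1) / (q - 1)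

section Scalar

variable {x y : ℝ}

lemma mul_rpow_mul_rpow_le_mul_add (hx : 0 ≤ x) (hy : 0 < y) {r : ℝ} (hr : r ≤ 1) :
    r * (x ^ (1 - r) * y ^ r) ≤ r * ((1 - r) * x + r * y) := by
  rcases lt_trichotomy r 0 with hneg | rfl | hpos
  · refine mul_le_mul_of_nonpos_left ?_ hneg.le
    have hb := one_add_mul_self_le_rpow_one_add (s := x / y - 1)
      (by linarith [div_nonneg hx hy.le]) (p := 1 - r) (by linarith)
    rw [add_sub_cancel, Real.div_rpow hx hy.le] at hb
    calc (1 - r) * x + r * y = y * (1 + (1 - r) * (x / y - 1)) := by field_simp; ring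
      _ ≤ y * (x ^ (1 - r) / y ^ (1 - r)) := mul_le_mul_of_nonneg_left hb hy.le
      _ = x ^ (1 - r) * y ^ r := by rw [Real.rpow_sub hy, Real.rpow_one]; field_simp
  · simp
  · exact mul_le_mul_of_nonneg_left
      (Real.geom_mean_le_arith_mean2_weighted (by linarith) hpos.le hx hy.le (by ring)) hpos.le

lemma sub_rpow_mul_dlog_sub_le {q : ℝ} (hq : q ≤ 2) (hq1 : q ≠ 1) (hx : 0 < x) (hy : 0 < y) :
    x - x ^ (2 - q) * (dlog q x - dlog q y) ≤ y := by
  set r := q - 1 with hr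
  have hr0 : r ≠ 0 := sub_ne_zero.mpr hq1
  have hdiff : x ^ (2 - q) * (dlog q x - dlog q y) = r * (x - x ^ (1 - r) * y ^ r) / r ^ 2 := by
    have h2q : 2 - q = 1 - r := by ring
    simp only [dlog, if_neg hq1, ← hr, h2q]
    rw [div_sub_div_same, sub_sub_sub_cancel_right, mul_div_assoc', mul_sub,
      ← Real.rpow_add hx, sub_add_cancel, Real.rpow_one]
    field_simp
  have hgm := mul_rpow_mul_rpow_le_mul_add hx.le hy (by linarith : r ≤ 1)
  rw [hdiff, sub_le_iff_le_add, ← sub_le_iff_le_add', le_div_iff₀ (by positivity)]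
  nlinarith

end Scalar

namespace Matrix

variable {ι : Type*} [Fintype ι] [DecidableEq ι]

lemma sum_normSq_row_eq_one {U : Matrix ι ι ℂ} (hU : U * star U = 1) (i : ι) :
    ∑ j, Complex.normSq (U i j) = 1 := by
  have hii := congrFun (congrFun hU i) i
  simp only [mul_apply, star_apply, Complex.star_def, Complex.mul_conj, one_apply_eq] at hii
  exact_mod_cast hii

lemma map_normSq_mem_doublyStochastic {U : Matrix ι ι ℂ} (hU : U ∈ unitaryGroup ι ℂ) :
    U.map Complex.normSq ∈ doublyStochastic ℝ ι := by
  refine mem_doublyStochastic_iff_sum.mpr ⟨fun i j => Complex.normSq_nonneg _,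
    sum_normSq_row_eq_one (mem_unitaryGroup_iff.mp hU), fun j => ?_⟩
  have hcol := sum_normSq_row_eq_one (U := star U) (by simpa using mem_unitaryGroup_iff'.mp hU) j
  simpa only [map_apply, star_apply, Complex.star_def, Complex.normSq_conj] using hcol

lemma sum_add_sum_mul_le_of_mem_doublyStochastic {w : Matrix ι ι ℝ}
    (hw : w ∈ doublyStochastic ℝ ι) {u v : ι → ℝ} {c : ι → ι → ℝ}
    (h : ∀ i j, u i + c i j ≤ v j) :
    ∑ i, u i + ∑ i, ∑ j, w i j * c i j ≤ ∑ j, v j := by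
  have hu : ∑ i, u i = ∑ i, ∑ j, w i j * u i := by
    simp only [← Finset.sum_mul, sum_row_of_mem_doublyStochastic hw, one_mul]
  have hv : ∑ j, v j = ∑ i, ∑ j, w i j * v j := by
    rw [Finset.sum_comm]
    simp only [← Finset.sum_mul, sum_col_of_mem_doublyStochastic hw, one_mul]
  rw [hu, hv, ← Finset.sum_add_distrib]
  refine Finset.sum_le_sum fun i _ => ?_
  rw [← Finset.sum_add_distrib]
  refine Finset.sum_le_sum fun j _ => ?_
  rw [← mul_add]
  exact mul_le_mul_of_nonneg_left (h i j) (nonneg_of_mem_doublyStochastic hw)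

lemma trace_conj_diagonal_mul_conj_diagonal (U V : Matrix ι ι ℂ) (a b : ι → ℝ) :
    trace (U * diagonal (fun i => (a i : ℂ)) * star U *
        (V * diagonal (fun j => (b j : ℂ)) * star V))
      = ((∑ i, ∑ j, (star U * V).map Complex.normSq i j * (a i * b j) : ℝ) : ℂ) := by
  set W := star U * V
  have hcyc : trace (U * diagonal (fun i => (a i : ℂ)) * star U *
      (V * diagonal (fun j => (b j : ℂ)) * star V))
      = trace (diagonal (fun i => (a i : ℂ)) * W * diagonal (fun j => (b j : ℂ)) * star W) := by
    simp only [W, star_mul, star_star, Matrix.mul_assoc]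
    rw [trace_mul_comm U]
    simp only [Matrix.mul_assoc]
  rw [hcyc]
  simp only [trace, diagonal, diag_apply, mul_apply, of_apply, ite_mul, zero_mul,
    Finset.sum_ite_eq, Finset.mem_univ, ↓reduceIte, mul_ite, mul_zero, Finset.sum_ite_eq',
    star_apply, RCLike.star_def, map_apply, Complex.ofReal_sum, Complex.ofReal_mul]
  refine Finset.sum_congr rfl fun i _ => Finset.sum_congr rfl fun j _ => ?_
  rw [← Complex.mul_conj]
  ring

end Matrix

section FunctionalCalculus

variable {A B : Matrix (Fin n) (Fin n) ℂ}

lemma matFun_of_isHermitian (hA : A.IsHermitian) (f : ℝ → ℝ) :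
    matFun f A = (hA.eigenvectorUnitary : Matrix (Fin n) (Fin n) ℂ) *
      diagonal (fun i => (f (hA.eigenvalues i) : ℂ)) *
      star (hA.eigenvectorUnitary : Matrix (Fin n) (Fin n) ℂ) :=
  dif_pos hA

lemma rtr_eq_sum_eigenvalues (hA : A.IsHermitian) : rtr A = ∑ i, hA.eigenvalues i := by
  simp [rtr, hA.trace_eq_sum_eigenvalues]

lemma rtr_matFun_mul_matFun (hA : A.IsHermitian) (hB : B.IsHermitian) (f g : ℝ → ℝ) :
    rtr (matFun f A * matFun g B) =
      ∑ i, ∑ j, (star (hA.eigenvectorUnitary : Matrix (Fin n) (Fin n) ℂ) *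
        hB.eigenvectorUnitary).map Complex.normSq i j *
          (f (hA.eigenvalues i) * g (hB.eigenvalues j)) := by
  rw [rtr, matFun_of_isHermitian hA, matFun_of_isHermitian hB,
    trace_conj_diagonal_mul_conj_diagonal, Complex.ofReal_re]

lemma rtr_matFun_mul_matFun_self (hA : A.IsHermitian) (f g : ℝ → ℝ) :
    rtr (matFun f A * matFun g A) = ∑ i, f (hA.eigenvalues i) * g (hA.eigenvalues i) := by
  rw [rtr_matFun_mul_matFun hA hA, Unitary.coe_star_mul_self]
  simp [one_apply]

end FunctionalCalculus

theorem trace_variational_max {n : ℕ} (q : ℝ) (hq : q ≤ 2) (hq1 : q ≠ 1)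
    (Y : Matrix (Fin n) (Fin n) ℂ) (hY : Y.PosDef) :
    (∀ X : Matrix (Fin n) (Fin n) ℂ, X.PosDef →
      rtr X - rtr (mpow X (2 - q) * (mlogq q X - mlogq q Y)) ≤ rtr Y) ∧
    rtr Y - rtr (mpow Y (2 - q) * (mlogq q Y - mlogq q Y)) = rtr Y := by
  refine ⟨fun X hX => ?_, by simp [rtr]⟩
  have hsplit : rtr (mpow X (2 - q) * (mlogq q X - mlogq q Y)) =
      rtr (matFun (· ^ (2 - q)) X * matFun (dlog q) X) -
        rtr (matFun (· ^ (2 - q)) X * matFun (dlog q) Y) := by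
    simp only [rtr, Matrix.mul_sub, trace_sub, Complex.sub_re]
    rfl
  have hw := map_normSq_mem_doublyStochastic
    (mul_mem (Unitary.star_mem hX.1.eigenvectorUnitary.2) hY.1.eigenvectorUnitary.2)
  have hsum := sum_add_sum_mul_le_of_mem_doublyStochastic hw
    (u := fun i => hX.1.eigenvalues i -
      hX.1.eigenvalues i ^ (2 - q) * dlog q (hX.1.eigenvalues i))
    (v := hY.1.eigenvalues)
    (c := fun i j => hX.1.eigenvalues i ^ (2 - q) * dlog q (hY.1.eigenvalues j))
    (fun i j => by
      have := sub_rpow_mul_dlog_sub_le hq hq1 (hX.eigenvalues_pos i) (hY.eigenvalues_pos j)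
      linarith)
  rw [hsplit, rtr_matFun_mul_matFun_self hX.1, rtr_matFun_mul_matFun hX.1 hY.1,
    rtr_eq_sum_eigenvalues hX.1, rtr_eq_sum_eigenvalues hY.1]
  simp only [Finset.sum_sub_distrib] at hsum
  linarith
end

section
/- Let 1 < q ≤ 2, and let X be a positive definite n×n matrix with Tr(X) = 1. Then Tr(X^{2-q} log_q X) equals the supremum over self-adjoint matrices L with L > -1/(q-1)·I of Tr(X^{2-q} L) - log_q(Tr exp_q L), and the supremum is attained at L = log_q X. -/
open Matrix ComplexOrder

variable {n : ℕ}

/-!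
Diagonalize `X = ∑ xᵢ uᵢuᵢ*` and `L = ∑ μⱼ vⱼvⱼ*`. Then `Tr(X^{2-q} L) = ∑ pᵢⱼ xᵢ^{2-q} μⱼ`, where
`pᵢⱼ = |⟪uᵢ, vⱼ⟫|²` is doubly stochastic. Writing `μⱼ = log_q aⱼ` with `aⱼ = exp_q μⱼ > 0` and
multiplying by `q - 1`, the inequality becomes `∑ pᵢⱼ xᵢ^{2-q} aⱼ^{q-1} ≤ (∑ aⱼ)^{q-1}`, a Hölder
inequality with weights `2 - q` and `q - 1` that follows from the weighted AM-GM inequality,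
because `p` is doubly stochastic and `∑ xᵢ = 1`. At `L = log_q X` we have `exp_q L = X`, whose trace
is `1`, so the penalty term vanishes.
-/

/-- The scalar deformed exponential: `mexpq q = matFun (dexp q)` definitionally. -/
noncomputable def dexp (q s : ℝ) : ℝ :=
  if q = 1 then Real.exp s else ((q - 1) * s + 1) ^ (1 / (q - 1))

lemma sub_one_mul_dlog_add_one (q t : ℝ) : (q - 1) * dlog q t + 1 = t ^ (q - 1) := by
  by_cases hq : q = 1
  · simp [hq]
  · rw [dlog, if_neg hq, mul_div_cancel₀ _ (sub_ne_zero.mpr hq), sub_add_cancel]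

lemma dexp_pos {q s : ℝ} (h : 0 < (q - 1) * s + 1) : 0 < dexp q s := by
  unfold dexp
  split_ifs
  exacts [Real.exp_pos s, Real.rpow_pos_of_pos h _]

lemma dlog_dexp {q s : ℝ} (h : 0 < (q - 1) * s + 1) : dlog q (dexp q s) = s := by
  by_cases hq : q = 1
  · simp [dlog, dexp, hq]
  · have hq' : q - 1 ≠ 0 := sub_ne_zero.mpr hq
    rw [dlog, dexp, if_neg hq, if_neg hq, ← Real.rpow_mul h.le, one_div_mul_cancel hq',
      Real.rpow_one, add_sub_cancel_right, mul_div_cancel_left₀ _ hq']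

lemma dexp_dlog (q : ℝ) {t : ℝ} (ht : 0 < t) : dexp q (dlog q t) = t := by
  by_cases hq : q = 1
  · simp [dlog, dexp, hq, Real.exp_log ht]
  · have hq' : q - 1 ≠ 0 := sub_ne_zero.mpr hq
    rw [dexp, if_neg hq, sub_one_mul_dlog_add_one, ← Real.rpow_mul ht.le, mul_one_div_cancel hq',
      Real.rpow_one]

lemma dlog_one (q : ℝ) : dlog q 1 = 0 := by
  simp [dlog]

section DoublyStochastic

variable {m : Type*} [Fintype m] [DecidableEq m] {P : Matrix m m ℝ}

lemma sum_sum_mul_add_of_mem_doublyStochastic (hP : P ∈ doublyStochastic ℝ m) (u v : m → ℝ) :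
    ∑ i, ∑ j, P i j * (u i + v j) = ∑ i, u i + ∑ j, v j := by
  simp only [mul_add, Finset.sum_add_distrib]
  rw [Finset.sum_comm (f := fun i j => P i j * v j)]
  simp only [mul_comm (P _ _), ← Finset.mul_sum, sum_row_of_mem_doublyStochastic hP,
    sum_col_of_mem_doublyStochastic hP, mul_one]

lemma sum_sum_mul_rpow_mul_rpow_le_one (hP : P ∈ doublyStochastic ℝ m) {x a : m → ℝ}
    (hx : ∀ i, 0 ≤ x i) (ha : ∀ j, 0 ≤ a j) (hx1 : ∑ i, x i = 1) (ha1 : ∑ j, a j = 1)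
    {s r : ℝ} (hs : 0 ≤ s) (hr : 0 ≤ r) (hsr : s + r = 1) :
    ∑ i, ∑ j, P i j * (x i ^ s * a j ^ r) ≤ 1 :=
  calc ∑ i, ∑ j, P i j * (x i ^ s * a j ^ r)
      ≤ ∑ i, ∑ j, P i j * (s * x i + r * a j) := by
        gcongr with i _ j _
        · exact nonneg_of_mem_doublyStochastic hP
        · exact Real.geom_mean_le_arith_mean2_weighted hs hr (hx i) (ha j) hsr
    _ = 1 := by
        rw [sum_sum_mul_add_of_mem_doublyStochastic hP, ← Finset.mul_sum, ← Finset.mul_sum, hx1,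
          ha1, mul_one, mul_one, hsr]

lemma sum_sum_mul_rpow_mul_rpow_le (hP : P ∈ doublyStochastic ℝ m) {x a : m → ℝ}
    (hx : ∀ i, 0 ≤ x i) (ha : ∀ j, 0 ≤ a j) (hX : 0 < ∑ i, x i) (hA : 0 < ∑ j, a j)
    {s r : ℝ} (hs : 0 ≤ s) (hr : 0 ≤ r) (hsr : s + r = 1) :
    ∑ i, ∑ j, P i j * (x i ^ s * a j ^ r) ≤ (∑ i, x i) ^ s * (∑ j, a j) ^ r := by
  set X := ∑ i, x i
  set A := ∑ j, a j
  have hnormalized := sum_sum_mul_rpow_mul_rpow_le_one hP (x := fun i => x i / X)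
    (a := fun j => a j / A) (fun i => div_nonneg (hx i) hX.le) (fun j => div_nonneg (ha j) hA.le)
    (by rw [← Finset.sum_div, div_self hX.ne'])
    (by rw [← Finset.sum_div, div_self hA.ne']) hs hr hsr
  calc ∑ i, ∑ j, P i j * (x i ^ s * a j ^ r)
      = X ^ s * A ^ r * ∑ i, ∑ j, P i j * ((x i / X) ^ s * (a j / A) ^ r) := by
        simp only [Finset.mul_sum, Real.div_rpow (hx _) hX.le, Real.div_rpow (ha _) hA.le]
        refine Finset.sum_congr rfl fun i _ => Finset.sum_congr rfl fun j _ => ?_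
        have := Real.rpow_pos_of_pos hX s
        have := Real.rpow_pos_of_pos hA r
        field_simp
    _ ≤ X ^ s * A ^ r := mul_le_of_le_one_right (by positivity) hnormalized

lemma sum_sum_mul_rpow_mul_dlog_sub_dlog_sum_le {q : ℝ} (hq1 : 1 < q) (hq2 : q ≤ 2)
    (hP : P ∈ doublyStochastic ℝ m) {x a : m → ℝ} (hx : ∀ i, 0 ≤ x i) (hx1 : ∑ i, x i = 1)
    (ha : ∀ j, 0 ≤ a j) (hA : 0 < ∑ j, a j) :
    ∑ i, ∑ j, P i j * (x i ^ (2 - q) * dlog q (a j)) - dlog q (∑ j, a j) ≤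
      ∑ i, x i ^ (2 - q) * dlog q (x i) := by
  have hq : 0 < q - 1 := sub_pos.mpr hq1
  have hdlog (t : ℝ) : (q - 1) * dlog q t = t ^ (q - 1) - 1 := by
    linarith [sub_one_mul_dlog_add_one q t]
  have hHolder := sum_sum_mul_rpow_mul_rpow_le hP hx ha (hx1 ▸ one_pos) hA
    (s := 2 - q) (r := q - 1) (by linarith) hq.le (by ring)
  rw [hx1, Real.one_rpow, one_mul] at hHolder
  refine le_of_mul_le_mul_left ?_ hq
  calc (q - 1) * (∑ i, ∑ j, P i j * (x i ^ (2 - q) * dlog q (a j)) - dlog q (∑ j, a j))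
      = ∑ i, ∑ j, P i j * (x i ^ (2 - q) * a j ^ (q - 1)) - ∑ i, x i ^ (2 - q)
          - ((∑ j, a j) ^ (q - 1) - 1) := by
        have hrow (i : m) : ∑ j, P i j * x i ^ (2 - q) = x i ^ (2 - q) := by
          rw [← Finset.sum_mul, sum_row_of_mem_doublyStochastic hP, one_mul]
        simp only [mul_sub, Finset.mul_sum, mul_left_comm (q - 1), hdlog, Finset.sum_sub_distrib,
          mul_one, hrow]
    _ ≤ (∑ j, a j) ^ (q - 1) - ∑ i, x i ^ (2 - q) - ((∑ j, a j) ^ (q - 1) - 1) := by gcongr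
    _ = (q - 1) * ∑ i, x i ^ (2 - q) * dlog q (x i) := by
        have hpow (i : m) : x i ^ (2 - q) * x i ^ (q - 1) = x i := by
          rw [← Real.rpow_add' (hx i) (by norm_num), sub_add_sub_cancel,
            show (2 : ℝ) - 1 = 1 by norm_num, Real.rpow_one]
        simp only [Finset.mul_sum, mul_left_comm (q - 1), hdlog, mul_sub, hpow, mul_one,
          Finset.sum_sub_distrib, hx1]
        ring

end DoublyStochastic

namespace Matrix

variable {m 𝕜 : Type*} [Fintype m] [DecidableEq m] [RCLike 𝕜]

lemma of_norm_sq_mem_doublyStochastic {W : Matrix m m 𝕜} (hW : W ∈ unitaryGroup m 𝕜) :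
    of (fun i j => ‖W i j‖ ^ 2) ∈ doublyStochastic ℝ m := by
  have hnorm_sq (i j : m) : ((‖W i j‖ ^ 2 : ℝ) : 𝕜) = W i j * star (W i j) := by
    rw [RCLike.ofReal_pow, RCLike.star_def, RCLike.mul_conj]
  refine mem_doublyStochastic_iff_sum.mpr ⟨fun i j => sq_nonneg _, fun i => ?_, fun j => ?_⟩
  · have hrow := congr_fun₂ (mem_unitaryGroup_iff.mp hW) i i
    rw [mul_apply, one_apply_eq] at hrow
    apply RCLike.ofReal_injective (K := 𝕜)
    simpa only [of_apply, RCLike.ofReal_sum, hnorm_sq, star_apply, RCLike.ofReal_one] using hrow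
  · have hcol := congr_fun₂ (mem_unitaryGroup_iff'.mp hW) j j
    rw [mul_apply, one_apply_eq] at hcol
    apply RCLike.ofReal_injective (K := 𝕜)
    simpa only [of_apply, RCLike.ofReal_sum, hnorm_sq, star_apply, RCLike.ofReal_one, mul_comm]
      using hcol

namespace IsHermitian

variable {A B : Matrix m m 𝕜}

lemma trace_cfc (hA : A.IsHermitian) (f : ℝ → ℝ) :
    (cfc f A).trace = ∑ i, (f (hA.eigenvalues i) : 𝕜) := by
  rw [hA.cfc_eq, IsHermitian.cfc, Unitary.conjStarAlgAut_apply, trace_mul_comm, ← mul_assoc,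
    Unitary.coe_star_mul_self, one_mul, trace_diagonal]
  rfl

/-- The transition probabilities `‖⟪uᵢ, vⱼ⟫‖²` between the eigenbases `(uᵢ)` of `A` and `(vⱼ)`
of `B`. -/
noncomputable def eigenOverlap (hA : A.IsHermitian) (hB : B.IsHermitian) : Matrix m m ℝ :=
  of fun i j =>
    ‖(star (hA.eigenvectorUnitary : Matrix m m 𝕜) * hB.eigenvectorUnitary) i j‖ ^ 2

lemma eigenOverlap_mem_doublyStochastic (hA : A.IsHermitian) (hB : B.IsHermitian) :
    eigenOverlap hA hB ∈ doublyStochastic ℝ m :=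
  of_norm_sq_mem_doublyStochastic (star hA.eigenvectorUnitary * hB.eigenvectorUnitary).2

lemma trace_cfc_mul_cfc (hA : A.IsHermitian) (hB : B.IsHermitian) (f g : ℝ → ℝ) :
    (cfc f A * cfc g B).trace =
      ∑ i, ∑ j,
        ((eigenOverlap hA hB i j * (f (hA.eigenvalues i) * g (hB.eigenvalues j)) : ℝ) : 𝕜) := by
  set U : Matrix m m 𝕜 := ↑hA.eigenvectorUnitary
  set W : Matrix m m 𝕜 := star U * hB.eigenvectorUnitary
  set D₁ : Matrix m m 𝕜 := diagonal (RCLike.ofReal ∘ f ∘ hA.eigenvalues)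
  set D₂ : Matrix m m 𝕜 := diagonal (RCLike.ofReal ∘ g ∘ hB.eigenvalues)
  have hconj : cfc f A * cfc g B = U * (D₁ * W * D₂ * star W) * star U := by
    simp only [hA.cfc_eq, hB.cfc_eq, IsHermitian.cfc, Unitary.conjStarAlgAut_apply, W, star_mul,
      star_star, mul_assoc, U, D₁, D₂,
      Unitary.mul_star_self_of_mem hA.eigenvectorUnitary.2, mul_one]
  rw [hconj, trace_mul_comm, ← mul_assoc, Unitary.coe_star_mul_self, one_mul]
  refine Finset.sum_congr rfl fun i _ => ?_
  rw [diag_apply, mul_apply]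
  refine Finset.sum_congr rfl fun j _ => ?_
  simp only [D₁, D₂, diagonal_mul, mul_diagonal, star_apply, eigenOverlap, of_apply,
    Function.comp_apply, RCLike.ofReal_mul, RCLike.ofReal_pow, ← RCLike.mul_conj, RCLike.star_def]
  ring

open scoped MatrixOrder in
lemma posDef_cfc_iff (hA : A.IsHermitian) (f : ℝ → ℝ) :
    (cfc f A).PosDef ↔ ∀ i, 0 < f (hA.eigenvalues i) := by
  rw [← isStrictlyPositive_iff_posDef]
  convert cfc_isStrictlyPositive_iff f A (A.finite_real_spectrum.continuousOn f) hA using 1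
  rw [hA.spectrum_real_eq_range_eigenvalues, Set.forall_mem_range]

lemma smul_cfc_add_one (hA : A.IsHermitian) (c : ℝ) (f : ℝ → ℝ) :
    c • cfc f A + 1 = cfc (fun t => c * f t + 1) A := by
  have hcont (g : ℝ → ℝ) := A.finite_real_spectrum.continuousOn g
  rw [← cfc_const_mul c f A (hcont f), ← map_one (algebraMap ℝ (Matrix m m 𝕜))]
  exact (cfc_add_const (1 : ℝ) (fun t => c * f t) A (hcont _) hA).symm

end IsHermitian

end Matrix

lemma matFun_eq_cfc (f : ℝ → ℝ) {A : Matrix (Fin n) (Fin n) ℂ} (hA : A.IsHermitian) :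
    matFun f A = cfc f A := by
  rw [matFun, dif_pos hA, hA.cfc_eq, IsHermitian.cfc, Unitary.conjStarAlgAut_apply]
  rfl

lemma mlogq_eq_cfc (q : ℝ) {A : Matrix (Fin n) (Fin n) ℂ} (hA : A.IsHermitian) :
    mlogq q A = cfc (dlog q) A :=
  matFun_eq_cfc _ hA

lemma mexpq_eq_cfc (q : ℝ) {A : Matrix (Fin n) (Fin n) ℂ} (hA : A.IsHermitian) :
    mexpq q A = cfc (dexp q) A :=
  matFun_eq_cfc _ hA

lemma mexpq_mlogq (q : ℝ) {X : Matrix (Fin n) (Fin n) ℂ} (hX : X.PosDef) :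
    mexpq q (mlogq q X) = X := by
  have hXh := hX.isHermitian
  have hlog : (cfc (dlog q) X).IsHermitian := cfc_predicate (dlog q) X
  rw [mlogq_eq_cfc q hXh, mexpq_eq_cfc q hlog,
    ← cfc_comp' (dexp q) (dlog q) X ((X.finite_real_spectrum.image _).continuousOn _)
      (X.finite_real_spectrum.continuousOn _)
      hXh.isSelfAdjoint]
  conv_rhs => rw [← cfc_id' ℝ X hXh.isSelfAdjoint]
  refine cfc_congr ?_
  rw [hXh.spectrum_real_eq_range_eigenvalues]
  rintro _ ⟨i, rfl⟩
  exact dexp_dlog q (hX.eigenvalues_pos i)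

section DensityMatrix

variable {q : ℝ} {X : Matrix (Fin n) (Fin n) ℂ}

lemma rtr_mpow_mul_mlogq (hX : X.PosDef) :
    rtr (mpow X (2 - q) * mlogq q X) =
      ∑ i, hX.isHermitian.eigenvalues i ^ (2 - q) * dlog q (hX.isHermitian.eigenvalues i) := by
  have hXh := hX.isHermitian
  rw [mpow, matFun_eq_cfc _ hXh, mlogq_eq_cfc q hXh, ← cfc_mul _ _ X
    (X.finite_real_spectrum.continuousOn _) (X.finite_real_spectrum.continuousOn _), rtr,
    hXh.trace_cfc]
  simp

lemma rtr_mpow_mul_sub_dlog_rtr_mexpq_le (hX : X.PosDef) (hq1 : 1 < q) (hq2 : q ≤ 2)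
    (hTr : X.trace = 1) {L : Matrix (Fin n) (Fin n) ℂ} (hL : L.IsHermitian)
    (hLpos : ((q - 1) • L + 1).PosDef) :
    rtr (mpow X (2 - q) * L) - dlog q (rtr (mexpq q L)) ≤ rtr (mpow X (2 - q) * mlogq q X) := by
  have hXh := hX.isHermitian
  set x := hXh.eigenvalues
  set μ := hL.eigenvalues
  have hμ : ∀ j, 0 < (q - 1) * μ j + 1 := by
    rwa [← cfc_id' ℝ L hL.isSelfAdjoint, hL.smul_cfc_add_one, hL.posDef_cfc_iff] at hLpos
  have hx1 : ∑ i, x i = 1 := by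
    simpa [hTr] using (congrArg Complex.re hXh.trace_eq_sum_eigenvalues).symm
  have hpairing : rtr (mpow X (2 - q) * L) =
      ∑ i, ∑ j, hXh.eigenOverlap hL i j * (x i ^ (2 - q) * dlog q (dexp q (μ j))) :=
    calc rtr (mpow X (2 - q) * L) = rtr (cfc (· ^ (2 - q)) X * cfc id L) := by
          rw [mpow, matFun_eq_cfc _ hXh, cfc_id ℝ L hL.isSelfAdjoint]
      _ = _ := by
          rw [rtr, hXh.trace_cfc_mul_cfc hL]
          simp [x, μ, dlog_dexp (hμ _)]
  have hexp : rtr (mexpq q L) = ∑ j, dexp q (μ j) := by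
    rw [mexpq_eq_cfc q hL, rtr, hL.trace_cfc]
    simp [μ]
  rw [hpairing, hexp, rtr_mpow_mul_mlogq hX]
  refine sum_sum_mul_rpow_mul_dlog_sub_dlog_sum_le hq1 hq2
    (hXh.eigenOverlap_mem_doublyStochastic hL) (fun i => (hX.eigenvalues_pos i).le) hx1
    (fun j => (dexp_pos (hμ j)).le) (Finset.sum_pos (fun j _ => dexp_pos (hμ j)) ?_)
  exact Finset.nonempty_of_sum_ne_zero (hx1 ▸ one_ne_zero)

end DensityMatrix

theorem gibbs_dual_variational {n : ℕ} (q : ℝ) (hq1 : 1 < q) (hq2 : q ≤ 2)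
    (X : Matrix (Fin n) (Fin n) ℂ) (hX : X.PosDef) (hTr : X.trace = 1) :
    (∀ L : Matrix (Fin n) (Fin n) ℂ, L.IsHermitian → ((q - 1) • L + 1).PosDef →
      rtr (mpow X (2 - q) * L) - dlog q (rtr (mexpq q L)) ≤
        rtr (mpow X (2 - q) * mlogq q X)) ∧
    (mlogq q X).IsHermitian ∧ ((q - 1) • mlogq q X + 1).PosDef ∧
    rtr (mpow X (2 - q) * mlogq q X) - dlog q (rtr (mexpq q (mlogq q X))) =
      rtr (mpow X (2 - q) * mlogq q X) := by
  have hXh := hX.isHermitian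
  refine ⟨fun L hL hLpos => rtr_mpow_mul_sub_dlog_rtr_mexpq_le hX hq1 hq2 hTr hL hLpos, ?_, ?_, ?_⟩
  · rw [mlogq_eq_cfc q hXh]
    exact cfc_predicate _ _
  · rw [mlogq_eq_cfc q hXh, hXh.smul_cfc_add_one, hXh.posDef_cfc_iff]
    intro i
    rw [sub_one_mul_dlog_add_one]
    exact Real.rpow_pos_of_pos (hX.eigenvalues_pos i) _
  · rw [mexpq_mlogq q hX, show rtr X = 1 by simp [rtr, hTr], dlog_one, sub_zero]
end
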